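/- Let k = (3a²b²c²(a² + b² + c²) + 2(b⁴c⁴ + c⁴a⁴ + a⁴b⁴) − a⁶(b² + c²) − b⁶(c² + a²) − c⁶(a² + b²))/Δ², where Δ = (a+b+c)(b+c−a)(c+a−b)(a+b−c). Then (dist cB aC)² = k·a², (dist aC bA)² = k·b², and (dist bA cB)² = k·c²; hence triangle bA cB aC is similar to triangle ABC (and congruent to triangle cA aB bC). -/

import Mathlib

/-!
Let `S` be the signed double area of `ABC`. Solving the two linear conditions on each center by
Cramer's rule gives `2S • (aC - C) = b² • rot(B - C)`, where `rot` is the rotation by a right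
angle, and cyclically for `bA` and `cB`. Hence `2S • (cB - aC)` is an explicit vector whose squared
length is `a² (a²b² + b²c² + c²a²)`, while `4S² = Δ` by Heron's formula. So every squared side of
`bA cB aC` is `(a²b² + b²c² + c²a²) / Δ` times the corresponding squared side of `ABC`, and this
ratio is the stated `k`.
-/

open EuclideanGeometry RealInnerProductSpace

namespace EuclideanSpace

lemma dist_sq_fin_two (x y : EuclideanSpace ℝ (Fin 2)) :
    dist x y ^ 2 = (x 0 - y 0) ^ 2 + (x 1 - y 1) ^ 2 := by
  rw [EuclideanSpace.dist_eq, Real.sq_sqrt (by positivity)]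
  simp [Fin.sum_univ_two, Real.dist_eq, sq_abs]

lemma inner_fin_two (x y : EuclideanSpace ℝ (Fin 2)) : ⟪x, y⟫ = x 0 * y 0 + x 1 * y 1 := by
  simp [PiLp.inner_apply, Fin.sum_univ_two, mul_comm]

def wedge (u v : EuclideanSpace ℝ (Fin 2)) : ℝ := u 0 * v 1 - u 1 * v 0

lemma wedge_sub_sub_rotate (A B C : EuclideanSpace ℝ (Fin 2)) :
    wedge (A - B) (C - B) = wedge (B - C) (A - C) := by
  simp only [wedge, PiLp.sub_apply]; ring

end EuclideanSpace

open EuclideanSpace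

section StrictTriangle

variable {V P : Type*} [NormedAddCommGroup V] [NormedSpace ℝ V] [StrictConvexSpace ℝ V]
  [MetricSpace P] [NormedAddTorsor V P]

theorem dist_lt_dist_add_dist_of_not_collinear {a b c : P} (h : ¬ Collinear ℝ {a, b, c}) :
    dist a c < dist a b + dist b c :=
  dist_lt_dist_add_dist_iff.2 fun hw => h hw.collinear

theorem AffineIndependent.dist_lt_dist_add_dist {A B C : P} (h : AffineIndependent ℝ ![A, B, C]) :
    dist B C < dist C A + dist A B ∧ dist C A < dist A B + dist B C ∧
      dist A B < dist B C + dist C A := by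
  have hnc := affineIndependent_iff_not_collinear_set.1 h
  have hBAC := dist_lt_dist_add_dist_of_not_collinear
    (show ¬ Collinear ℝ {B, A, C} by rwa [Set.insert_comm])
  have hCBA := dist_lt_dist_add_dist_of_not_collinear
    (show ¬ Collinear ℝ {C, B, A} by
      rwa [Set.insert_comm C B, Set.pair_comm C A, Set.insert_comm B A])
  have hACB := dist_lt_dist_add_dist_of_not_collinear
    (show ¬ Collinear ℝ {A, C, B} by rwa [Set.pair_comm])
  refine ⟨?_, ?_, ?_⟩ <;> linarith [dist_comm A B, dist_comm B C, dist_comm C A]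

end StrictTriangle

def heronProduct (a b c : ℝ) : ℝ := (a + b + c) * (b + c - a) * (c + a - b) * (a + b - c)

lemma heronProduct_rotate (a b c : ℝ) : heronProduct b c a = heronProduct a b c := by
  unfold heronProduct; ring

lemma heronProduct_pos {a b c : ℝ} (ha : a < b + c) (hb : b < c + a) (hc : c < a + b) :
    0 < heronProduct a b c := by
  unfold heronProduct
  have : 0 < a + b + c := by linarith
  have : 0 < b + c - a := by linarith
  have : 0 < c + a - b := by linarith
  have : 0 < a + b - c := by linarith
  positivity

lemma heronProduct_dist_eq_four_mul_wedge_sq (A B C : EuclideanSpace ℝ (Fin 2)) :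
    heronProduct (dist B C) (dist C A) (dist A B) = 4 * wedge (B - C) (A - C) ^ 2 := by
  have expand (a b c : ℝ) : heronProduct a b c = 2 * a ^ 2 * b ^ 2 + 2 * b ^ 2 * c ^ 2
      + 2 * c ^ 2 * a ^ 2 - (a ^ 2) ^ 2 - (b ^ 2) ^ 2 - (c ^ 2) ^ 2 := by
    unfold heronProduct; ring
  simp only [expand, dist_sq_fin_two, wedge, PiLp.sub_apply]
  ring

/-- Cramer's rule for `⟪X - C, B - C⟫ = 0` and `⟪X - C, A - C⟫ = ‖A - C‖² / 2`, the latter being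
`dist X A = dist X C` after expanding squares. -/
lemma two_mul_wedge_mul_sub_of_tangent {A B C X : EuclideanSpace ℝ (Fin 2)}
    (hXA : dist X A = dist X C) (hXB : ⟪X - C, B - C⟫ = 0) :
    2 * wedge (B - C) (A - C) * (X 0 - C 0) = -(dist C A ^ 2 * (B 1 - C 1)) ∧
    2 * wedge (B - C) (A - C) * (X 1 - C 1) = dist C A ^ 2 * (B 0 - C 0) := by
  have hsq := congrArg (· ^ 2) hXA
  simp only [dist_sq_fin_two] at hsq
  rw [inner_fin_two] at hXB
  simp only [wedge, dist_sq_fin_two, PiLp.sub_apply] at hXB ⊢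
  constructor
  · linear_combination 2 * (A 1 - C 1) * hXB + (B 1 - C 1) * hsq
  · linear_combination (-2 * (A 0 - C 0)) * hXB - (B 0 - C 0) * hsq

lemma dist_sq_mul_heronProduct_of_tangent {A B C X Z : EuclideanSpace ℝ (Fin 2)}
    (hXA : dist X A = dist X C) (hXB : ⟪X - C, B - C⟫ = 0)
    (hZC : dist Z C = dist Z B) (hZA : ⟪Z - B, A - B⟫ = 0) :
    dist Z X ^ 2 * heronProduct (dist B C) (dist C A) (dist A B) =
      dist B C ^ 2 * (dist B C ^ 2 * dist C A ^ 2 + dist C A ^ 2 * dist A B ^ 2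
        + dist A B ^ 2 * dist B C ^ 2) := by
  set W := wedge (B - C) (A - C)
  obtain ⟨hX0, hX1⟩ := two_mul_wedge_mul_sub_of_tangent hXA hXB
  obtain ⟨hZ0, hZ1⟩ := two_mul_wedge_mul_sub_of_tangent hZC hZA
  rw [wedge_sub_sub_rotate] at hZ0 hZ1
  have h0 : 2 * W * (Z 0 - X 0) =
      2 * W * (B 0 - C 0) - dist B C ^ 2 * (A 1 - B 1) + dist C A ^ 2 * (B 1 - C 1) := by
    linear_combination hZ0 - hX0
  have h1 : 2 * W * (Z 1 - X 1) =
      2 * W * (B 1 - C 1) + dist B C ^ 2 * (A 0 - B 0) - dist C A ^ 2 * (B 0 - C 0) := by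
    linear_combination hZ1 - hX1
  calc dist Z X ^ 2 * heronProduct (dist B C) (dist C A) (dist A B)
      = (2 * W * (Z 0 - X 0)) ^ 2 + (2 * W * (Z 1 - X 1)) ^ 2 := by
        rw [heronProduct_dist_eq_four_mul_wedge_sq, dist_sq_fin_two]; ring
    _ = _ := by
        rw [h0, h1]
        simp only [W, wedge, dist_sq_fin_two, PiLp.sub_apply]
        ring

lemma eq_sqrt_mul_of_sq_eq_mul_sq {x y k : ℝ} (hx : 0 ≤ x) (hy : 0 ≤ y)
    (h : x ^ 2 = k * y ^ 2) : x = √k * y := by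
  rw [← Real.sqrt_sq hx, h, Real.sqrt_mul' _ (sq_nonneg y), Real.sqrt_sq hy]

theorem triangle_bA_cB_aC_similar
    (A B C aC bA cB : EuclideanSpace ℝ (Fin 2))
    (hABC : AffineIndependent ℝ ![A, B, C])
    (a b c : ℝ) (ha : a = dist B C) (hb : b = dist C A) (hc : c = dist A B)
    (haC1 : dist aC A = dist aC C) (haC2 : ⟪aC - C, B - C⟫ = 0)
    (hbA1 : dist bA B = dist bA A) (hbA2 : ⟪bA - A, C - A⟫ = 0)
    (hcB1 : dist cB C = dist cB B) (hcB2 : ⟪cB - B, A - B⟫ = 0)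
    (k : ℝ)
    (hk : k = (3*a^2*b^2*c^2*(a^2 + b^2 + c^2) + 2*(b^4*c^4 + c^4*a^4 + a^4*b^4)
        - a^6*(b^2 + c^2) - b^6*(c^2 + a^2) - c^6*(a^2 + b^2)) /
        ((a+b+c)*(b+c-a)*(c+a-b)*(a+b-c))^2) :
    ((dist cB aC)^2 = k * a^2 ∧ (dist aC bA)^2 = k * b^2 ∧ (dist bA cB)^2 = k * c^2) ∧
    ∃ r : ℝ, 0 < r ∧ dist cB aC = r * dist B C ∧ dist aC bA = r * dist C A ∧
      dist bA cB = r * dist A B := by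
  obtain ⟨hlt_a, hlt_b, hlt_c⟩ : a < b + c ∧ b < c + a ∧ c < a + b := by
    subst ha hb hc; exact hABC.dist_lt_dist_add_dist
  have hΔ_pos := heronProduct_pos hlt_a hlt_b hlt_c
  have hΔ : (a+b+c)*(b+c-a)*(c+a-b)*(a+b-c) ≠ 0 := hΔ_pos.ne'
  have hk' : k = (a^2*b^2 + b^2*c^2 + c^2*a^2) / heronProduct a b c := by
    rw [hk, heronProduct, div_eq_div_iff (pow_ne_zero 2 hΔ) hΔ]
    ring
  have side (d s : ℝ) (h : d ^ 2 * heronProduct a b c = s ^ 2 * (a^2*b^2 + b^2*c^2 + c^2*a^2)) :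
      d ^ 2 = k * s ^ 2 := by
    rw [hk', div_mul_eq_mul_div, eq_div_iff hΔ_pos.ne']; linear_combination h
  have hka := side (dist cB aC) a (by
    subst ha hb hc; exact dist_sq_mul_heronProduct_of_tangent haC1 haC2 hcB1 hcB2)
  have hkb := side (dist aC bA) b (by
    subst ha hb hc; rw [← heronProduct_rotate]
    linear_combination dist_sq_mul_heronProduct_of_tangent hbA1 hbA2 haC1 haC2)
  have hkc := side (dist bA cB) c (by
    subst ha hb hc; rw [← heronProduct_rotate, ← heronProduct_rotate]
    linear_combination dist_sq_mul_heronProduct_of_tangent hcB1 hcB2 hbA1 hbA2)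
  have hk0 : 0 < k := by
    rw [hk']
    have : 0 < a := by linarith
    have : 0 < b := by linarith
    positivity
  refine ⟨⟨hka, hkb, hkc⟩, √k, Real.sqrt_pos.2 hk0, ?_, ?_, ?_⟩
  · exact eq_sqrt_mul_of_sq_eq_mul_sq dist_nonneg dist_nonneg (by rwa [← ha])
  · exact eq_sqrt_mul_of_sq_eq_mul_sq dist_nonneg dist_nonneg (by rwa [← hb])
  · exact eq_sqrt_mul_of_sq_eq_mul_sq dist_nonneg dist_nonneg (by rwa [← hc])
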